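/- Let V be a type of vertices and let c : V → V → ℝ → ℝ be a time-dependent edge cost function satisfying the FIFO property (for all u, v ∈ V and t ≤ t', t + c u v t ≤ t' + c u v t') with c u v t ≥ 0 for all u, v, t. Then waiting at vertices never improves the arrival time: for every route p = [v₀, …, v_k], every departure time t, and every choice of nonnegative waiting times w₀, …, w_{k−1} ≥ 0, the arrival time at v_k when waiting w_i at each v_i (defined by t₀ = t, t_{i+1} = t_i + w_i + c v_i v_{i+1} (t_i + w_i)) is at least the arrival time A_p(t) obtained with all waiting times equal to zero. -/
import Mathlib


/-- Arrival times along a route `p` with departure time `t` and no waiting: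
`t₀ = t` and `t_{i+1} = t_i + c (p i) (p (i+1)) t_i`. -/
def arrival {V : Type*} (c : V → V → ℝ → ℝ) (p : ℕ → V) (t : ℝ) : ℕ → ℝ
  | 0 => t
  | i + 1 => arrival c p t i + c (p i) (p (i + 1)) (arrival c p t i)

/-- Arrival times along a route `p` with departure time `t` and waiting times `w`:
`t₀ = t` and `t_{i+1} = t_i + w i + c (p i) (p (i+1)) (t_i + w i)`. -/
def arrivalW {V : Type*} (c : V → V → ℝ → ℝ) (p : ℕ → V) (w : ℕ → ℝ) (t : ℝ) : ℕ → ℝ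
  | 0 => t
  | i + 1 =>
      arrivalW c p w t i + w i + c (p i) (p (i + 1)) (arrivalW c p w t i + w i)

/-- In a FIFO network with nonnegative edge costs, waiting at vertices never
improves the arrival time: for every route, departure time, and nonnegative
waiting times, the arrival time with waiting is at least the no-waiting arrival
time. -/
theorem no_waiting_is_optimal
    {V : Type*} (c : V → V → ℝ → ℝ)
    (hfifo : ∀ u v : V, ∀ t t' : ℝ, t ≤ t' → t + c u v t ≤ t' + c u v t')
    (hnn : ∀ u v : V, ∀ t : ℝ, 0 ≤ c u v t)
    (p : ℕ → V) (k : ℕ) (t : ℝ) (w : ℕ → ℝ) (hw : ∀ i, 0 ≤ w i) :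
    arrival c p t k ≤ arrivalW c p w t k := by
  induction k with
  | zero => simp [arrival, arrivalW]
  | succ i ih =>
    have h1 : arrival c p t i + c (p i) (p (i+1)) (arrival c p t i) ≤
        arrivalW c p w t i + c (p i) (p (i+1)) (arrivalW c p w t i) :=
      hfifo _ _ _ _ ih
    have h2 : arrivalW c p w t i + c (p i) (p (i+1)) (arrivalW c p w t i) ≤
        (arrivalW c p w t i + w i) + c (p i) (p (i+1)) (arrivalW c p w t i + w i) :=
      hfifo _ _ _ _ (by linarith [hw i])
    simpa [arrival, arrivalW] using h1.trans h2
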